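/- arXiv:math/0606339 — 3 statements merged into one kernel-verified Lean document; each statement's English description precedes it below -/
import Mathlib

section
/- For every f ∈ L²(ℝ) there exists a function F ∈ L²(Q) such that the partial sums F_N(x,t) = Σ_{|r|≤N} e^{−irt} f(x+πr) converge to F in the norm of L²(Q) as N → ∞, and the Parseval identity (1/(2π)) ∫₀^{2π} ∫₀^{π} |F(x,t)|² dx dt = ∫_ℝ |f(x)|² dx holds; consequently the Gel'fand transform f ↦ F is a linear isometry of L²(ℝ) into L²(Q). -/
open MeasureTheory

/-- The measure `dx·dt/(2π)` on the rectangle `Q = [0,π] × [0,2π]`. -/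
noncomputable def muQ : Measure (ℝ × ℝ) :=
  (ENNReal.ofReal (2 * Real.pi))⁻¹ •
    ((volume.restrict (Set.Icc (0:ℝ) Real.pi)).prod
      (volume.restrict (Set.Icc (0:ℝ) (2 * Real.pi))))

/-- The symmetric partial sums `F_N(x,t) = Σ_{|r|≤N} e^{−irt} f(x+πr)` of the Gel'fand
transform of `f`. -/
noncomputable def gelfandPartial (f : ℝ → ℂ) (N : ℕ) : ℝ × ℝ → ℂ := fun q =>
  ∑ r ∈ Finset.Icc (-(N : ℤ)) (N : ℤ),
    Complex.exp (-Complex.I * (r : ℂ) * (q.2 : ℂ)) * f (q.1 + Real.pi * r)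

/-!
The functions `e_r(x,t) = e^{-irt} f(x+πr)` are pairwise orthogonal in `L²(Q)`, since
`∫₀^{2π} e^{i(r-s)t} dt / 2π = δ_{rs}`, and `‖e_r‖²` is the integral of `|f|²` over
`[πr, π(r+1)]`. These squared norms sum to `‖f‖²`, so the orthogonal series `Σ e_r` converges in
the Hilbert space `L²(Q)`, and Pythagoras gives the Parseval identity.
-/

open Complex Filter Set
open scoped ComplexConjugate InnerProductSpace Real

section Pythagoras

variable {𝕜 E ι : Type*} [RCLike 𝕜] [NormedAddCommGroup E] [InnerProductSpace 𝕜 E] {v : ι → E}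

theorem norm_sum_sq_eq_sum_norm_sq_of_pairwise_inner_eq_zero
    (hv : Pairwise fun i j ↦ ⟪v i, v j⟫_𝕜 = 0) (s : Finset ι) :
    ‖∑ i ∈ s, v i‖ ^ 2 = ∑ i ∈ s, ‖v i‖ ^ 2 := by
  classical
  induction s using Finset.induction_on with
  | empty => simp
  | insert a s ha ih =>
    have hperp : ⟪v a, ∑ i ∈ s, v i⟫_𝕜 = 0 := by
      rw [inner_sum]
      exact Finset.sum_eq_zero fun i hi ↦ hv (ne_of_mem_of_not_mem hi ha).symm
    rw [Finset.sum_insert ha, Finset.sum_insert ha, ← ih, sq, sq, sq,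
      norm_add_sq_eq_norm_sq_add_norm_sq_of_inner_eq_zero _ _ hperp]

theorem exists_hasSum_of_pairwise_inner_eq_zero [CompleteSpace E]
    (hv : Pairwise fun i j ↦ ⟪v i, v j⟫_𝕜 = 0) {a : ℝ} (ha : HasSum (fun i ↦ ‖v i‖ ^ 2) a) :
    ∃ w, HasSum v w ∧ ‖w‖ ^ 2 = a := by
  have hpyth := norm_sum_sq_eq_sum_norm_sq_of_pairwise_inner_eq_zero hv
  have hsum : Summable v := by
    refine summable_iff_vanishing_norm.mpr fun ε hε ↦ ?_
    obtain ⟨s, hs⟩ := summable_iff_vanishing_norm.mp ha.summable (ε ^ 2) (by positivity)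
    refine ⟨s, fun t ht ↦ ?_⟩
    have hsq : ‖∑ i ∈ t, v i‖ ^ 2 < ε ^ 2 := by
      simpa [hpyth, Real.norm_of_nonneg (Finset.sum_nonneg fun i _ ↦ sq_nonneg ‖v i‖)]
        using hs t ht
    exact abs_lt_of_sq_lt_sq' hsq hε.le |>.2
  refine ⟨_, hsum.hasSum, tendsto_nhds_unique ?_ ha⟩
  simpa [HasSum, hpyth] using (hsum.hasSum.norm.pow 2)

end Pythagoras

section L2

variable {α ι E : Type*} {m : MeasurableSpace α} {μ : Measure α}

theorem MeasureTheory.MemLp.coeFn_sum_toLp [NormedAddCommGroup E] {p : ENNReal}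
    {u : ι → α → E} (hu : ∀ i, MemLp (u i) p μ) (s : Finset ι) :
    ⇑(∑ i ∈ s, (hu i).toLp (u i)) =ᵐ[μ] ∑ i ∈ s, u i := by
  classical
  induction s using Finset.induction_on with
  | empty => simpa using Lp.coeFn_zero E p μ
  | insert a s ha ih =>
    rw [Finset.sum_insert ha, Finset.sum_insert ha]
    exact (Lp.coeFn_add _ _).trans ((hu a).coeFn_toLp.add ih)

theorem MeasureTheory.MemLp.inner_toLp {𝕜 : Type*} [RCLike 𝕜] {u v : α → 𝕜}
    (hu : MemLp u 2 μ) (hv : MemLp v 2 μ) :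
    ⟪hu.toLp u, hv.toLp v⟫_𝕜 = ∫ x, conj (u x) * v x ∂μ := by
  rw [L2.inner_def]
  refine integral_congr_ae ?_
  filter_upwards [hu.coeFn_toLp, hv.coeFn_toLp] with x hux hvx
  rw [RCLike.inner_apply, hux, hvx, mul_comm]

theorem MeasureTheory.Lp.integral_norm_sq [NormedAddCommGroup E] [InnerProductSpace ℝ E]
    (F : Lp E 2 μ) : ∫ x, ‖F x‖ ^ 2 ∂μ = ‖F‖ ^ 2 := by
  simp_rw [← real_inner_self_eq_norm_sq, L2.inner_def]

end L2

theorem hasSum_integral_comp_add_mul_int {E : Type*} [NormedAddCommGroup E] [NormedSpace ℝ E]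
    {g : ℝ → E} (hg : Integrable g) {p : ℝ} (hp : 0 < p) :
    HasSum (fun n : ℤ ↦ ∫ x in Icc 0 p, g (x + p * n)) (∫ x, g x) := by
  have hcover := iUnion_Ioc_zsmul hp
  have h := hasSum_integral_iUnion (fun n : ℤ ↦ measurableSet_Ioc) (pairwise_disjoint_Ioc_zsmul p)
    (by rw [hcover]; exact hg.integrableOn)
  rw [hcover, Measure.restrict_univ] at h
  refine h.congr_fun fun n ↦ ?_
  rw [integral_Icc_eq_integral_Ioc, ← intervalIntegral.integral_of_le hp.le,
    intervalIntegral.integral_comp_add_right, intervalIntegral.integral_of_le (by nlinarith)]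
  congr 2
  simp only [zsmul_eq_mul, Int.cast_add, Int.cast_one]
  congr 1 <;> ring

theorem integral_exp_int_mul_I (k : ℤ) :
    ∫ t in Icc 0 (2 * π), exp (k * t * I) = if k = 0 then (2 * π : ℂ) else 0 := by
  split_ifs with hk
  · simp [hk, Real.pi_pos.le]
  · have hkI : (k : ℂ) * I ≠ 0 := by simp [hk]
    have hperiod : exp (k * I * (2 * π : ℝ)) = 1 := by
      rw [← exp_int_mul_two_pi_mul_I k]; congr 1; push_cast; ring
    simp_rw [mul_right_comm _ _ I]
    rw [integral_Icc_eq_integral_Ioc, ← intervalIntegral.integral_of_le (by positivity),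
      integral_exp_mul_complex hkI, hperiod]
    simp

section Gelfand

variable {f : ℝ → ℂ}

noncomputable def gelfandTerm (f : ℝ → ℂ) (r : ℤ) (q : ℝ × ℝ) : ℂ :=
  exp (-I * r * q.2) * f (q.1 + π * r)

theorem gelfandPartial_eq_sum (f : ℝ → ℂ) (N : ℕ) :
    gelfandPartial f N = ∑ r ∈ Finset.Icc (-(N : ℤ)) N, gelfandTerm f r := by
  ext q
  simp [gelfandPartial, gelfandTerm]

theorem norm_gelfandTerm (f : ℝ → ℂ) (r : ℤ) (q : ℝ × ℝ) :
    ‖gelfandTerm f r q‖ = ‖f (q.1 + π * r)‖ := by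
  simp [gelfandTerm, norm_exp]

theorem memLp_gelfandTerm (hf : MemLp f 2 volume) (r : ℤ) : MemLp (gelfandTerm f r) 2 muQ := by
  have hshift : MemLp (fun q : ℝ × ℝ ↦ f (q.1 + π * r)) 2 muQ :=
    ((hf.comp_measurePreserving (measurePreserving_add_right volume (π * r))).restrict _
      |>.comp_fst _).smul_measure (by simp [Real.pi_pos])
  refine hshift.of_le ?_ (.of_forall fun q ↦ (norm_gelfandTerm f r q).le)
  exact (by fun_prop : Continuous fun q : ℝ × ℝ ↦ exp (-I * r * q.2)).aestronglyMeasurable.mul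
    hshift.1

theorem conj_gelfandTerm_mul (f : ℝ → ℂ) (r s : ℤ) (q : ℝ × ℝ) :
    conj (gelfandTerm f r q) * gelfandTerm f s q =
      conj (f (q.1 + π * r)) * f (q.1 + π * s) * exp ((r - s : ℤ) * q.2 * I) := by
  simp only [gelfandTerm, map_mul, ← exp_conj, map_neg, conj_I, map_intCast, conj_ofReal]
  rw [mul_mul_mul_comm, ← exp_add, mul_comm]
  push_cast
  congr 2
  ring

theorem integral_conj_gelfandTerm_mul (f : ℝ → ℂ) (r s : ℤ) :
    ∫ q, conj (gelfandTerm f r q) * gelfandTerm f s q ∂muQ =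
      if r = s then ((∫ x in Icc 0 π, ‖f (x + π * r)‖ ^ 2 : ℝ) : ℂ) else 0 := by
  simp_rw [conj_gelfandTerm_mul, muQ, integral_smul_measure]
  rw [integral_prod_mul (fun x ↦ conj (f (x + π * r)) * f (x + π * s))
    fun t : ℝ ↦ exp ((r - s : ℤ) * t * I), integral_exp_int_mul_I]
  simp_rw [sub_eq_zero]
  split_ifs with hrs
  · subst hrs
    simp_rw [conj_mul', ← integral_complex_ofReal]
    rw [ENNReal.toReal_inv, ENNReal.toReal_ofReal (by positivity), Complex.real_smul]
    push_cast
    field_simp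
  · simp

theorem inner_toLp_gelfandTerm (hf : MemLp f 2 volume) (r s : ℤ) :
    ⟪(memLp_gelfandTerm hf r).toLp _, (memLp_gelfandTerm hf s).toLp _⟫_ℂ =
      if r = s then ((∫ x in Icc 0 π, ‖f (x + π * r)‖ ^ 2 : ℝ) : ℂ) else 0 := by
  rw [MemLp.inner_toLp, integral_conj_gelfandTerm_mul]

theorem norm_toLp_gelfandTerm_sq (hf : MemLp f 2 volume) (r : ℤ) :
    ‖(memLp_gelfandTerm hf r).toLp _‖ ^ 2 = ∫ x in Icc 0 π, ‖f (x + π * r)‖ ^ 2 := by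
  rw [← inner_self_eq_norm_sq (𝕜 := ℂ), inner_toLp_gelfandTerm hf, if_pos rfl]
  exact ofReal_re _

end Gelfand

/-- for every `f ∈ L²(ℝ)` there is `F ∈ L²(Q)` such that the partial sums
`F_N` converge to `F` in `L²(Q)` and the Parseval identity
`∫_Q |F|² dμ_Q = ∫_ℝ |f|² dx` holds; hence the Gel'fand transform `f ↦ F` is a linear
isometry of `L²(ℝ)` into `L²(Q)`. -/
theorem gelfand_transform_isometry (f : ℝ → ℂ) (hf : MemLp f 2 volume) :
    ∃ F : ℝ × ℝ → ℂ, MemLp F 2 muQ ∧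
      Filter.Tendsto (fun N : ℕ => eLpNorm (fun q => gelfandPartial f N q - F q) 2 muQ)
        Filter.atTop (nhds 0) ∧
      ∫ q, ‖F q‖ ^ 2 ∂muQ = ∫ x : ℝ, ‖f x‖ ^ 2 := by
  set e : ℤ → Lp ℂ 2 muQ := fun r ↦ (memLp_gelfandTerm hf r).toLp _
  have horth : Pairwise fun r s ↦ ⟪e r, e s⟫_ℂ = 0 := fun r s hrs ↦
    (inner_toLp_gelfandTerm hf r s).trans (if_neg hrs)
  have hnorm : HasSum (fun r ↦ ‖e r‖ ^ 2) (∫ x, ‖f x‖ ^ 2) :=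
    (hasSum_integral_comp_add_mul_int hf.norm.integrable_sq Real.pi_pos).congr_fun
      (norm_toLp_gelfandTerm_sq hf)
  obtain ⟨T, hT, hTnorm⟩ := exists_hasSum_of_pairwise_inner_eq_zero horth hnorm
  refine ⟨T, Lp.memLp T, ?_, by rw [Lp.integral_norm_sq, hTnorm]⟩
  have hpartial := (Lp.tendsto_Lp_iff_tendsto_eLpNorm' _ T).mp (hT.comp Finset.tendsto_Icc_neg)
  refine hpartial.congr fun N ↦ eLpNorm_congr_ae (EventuallyEq.sub ?_ .rfl)
  rw [Function.comp_apply, gelfandPartial_eq_sum]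
  exact MemLp.coeFn_sum_toLp _ _
end

section
/- Let f ∈ L²(ℝ) and let F ∈ L²(Q) be its Gel'fand transform, i.e. the L²(Q)-limit of the partial sums Σ_{|r|≤N} e^{−irt} f(x+πr). Then for every r ∈ ℤ and for almost every x ∈ [0,π] one has the inversion formula f(x+πr) = (1/(2π)) ∫₀^{2π} e^{irt} F(x,t) dt. -/
/-!
For fixed `r`, the coefficient map `G ↦ (x ↦ ∫₀^{2π} e^{irt} G(x,t) dt)` is bounded from
`L¹(Q)` to `L¹[0,π]`, and by orthogonality of the exponentials `e^{ikt}` on `[0,2π]` it sends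
every partial sum `F_N` with `N ≥ |r|` to `x ↦ 2π f(x+πr)`. Hence the `L¹[0,π]`-distance between
`2π f(·+πr)` and the coefficient function of `F` is at most `‖F_N - F‖_{L¹(Q)}`, which tends to
zero because `L²`-convergence implies `L¹`-convergence on the finite measure space `Q`.
-/

open MeasureTheory

open Filter Topology Set
open scoped ENNReal Real

section

variable {α β : Type*} [MeasurableSpace α] [MeasurableSpace β]

lemma tendsto_eLpNorm_smul_measure {ι E : Type*} [NormedAddCommGroup E] {μ : Measure α}
    {l : Filter ι} {G : ι → α → E} {p : ℝ≥0∞} (hp : p ≠ ∞) {c : ℝ≥0∞} (hc : c ≠ ∞)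
    (h : Tendsto (fun i => eLpNorm (G i) p μ) l (𝓝 0)) :
    Tendsto (fun i => eLpNorm (G i) p (c • μ)) l (𝓝 0) := by
  simp_rw [eLpNorm_smul_measure_of_ne_top hp]
  simpa using
    ENNReal.Tendsto.const_mul h (Or.inr (ENNReal.rpow_ne_top_of_nonneg (by positivity) hc))

lemma tendsto_lintegral_enorm_of_tendsto_eLpNorm {ι E : Type*} [NormedAddCommGroup E]
    {μ : Measure α} [IsFiniteMeasure μ] {l : Filter ι} {G : ι → α → E} {p : ℝ≥0∞}
    (hp : 1 ≤ p) (hG : ∀ i, AEStronglyMeasurable (G i) μ)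
    (h : Tendsto (fun i => eLpNorm (G i) p μ) l (𝓝 0)) :
    Tendsto (fun i => ∫⁻ x, ‖G i x‖ₑ ∂μ) l (𝓝 0) := by
  have hC : μ univ ^ (1 / (1 : ℝ≥0∞).toReal - 1 / p.toReal) ≠ ∞ := by
    rcases eq_or_ne p ∞ with rfl | hp_top
    · simp
    · refine ENNReal.rpow_ne_top_of_nonneg (sub_nonneg.2 ?_) (measure_ne_top _ _)
      exact one_div_le_one_div_of_le (by simp) (ENNReal.toReal_mono hp_top hp)
  refine tendsto_of_tendsto_of_tendsto_of_le_of_le tendsto_const_nhds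
    (by simpa using ENNReal.Tendsto.mul_const h (Or.inr hC)) (fun _ => zero_le) fun i => ?_
  rw [← eLpNorm_one_eq_lintegral_enorm]
  simpa using eLpNorm_le_eLpNorm_mul_rpow_measure_univ hp (hG i)

lemma lintegral_enorm_integral_le_lintegral_enorm_prod {E : Type*} [NormedAddCommGroup E]
    [NormedSpace ℝ E] {μ : Measure α} {ν : Measure β} [SFinite ν] {G : α × β → E}
    (hG : AEStronglyMeasurable G (μ.prod ν)) :
    ∫⁻ x, ‖∫ y, G (x, y) ∂ν‖ₑ ∂μ ≤ ∫⁻ z, ‖G z‖ₑ ∂μ.prod ν :=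
  (lintegral_mono fun _ => enorm_integral_le_lintegral_enorm _).trans_eq
    (lintegral_prod _ hG.enorm).symm

lemma MeasureTheory.AEStronglyMeasurable.comp_add_right_of_absolutelyContinuous {G E : Type*}
    [MeasurableSpace G] [AddGroup G] [MeasurableAdd G] [TopologicalSpace E] {μ₀ μ : Measure G}
    [μ₀.IsAddRightInvariant] {f : G → E} (hf : AEStronglyMeasurable f μ₀) (hμ : μ ≪ μ₀)
    (a : G) : AEStronglyMeasurable (fun x => f (x + a)) μ :=
  hf.comp_quasiMeasurePreserving
    ((measurePreserving_add_right μ₀ a).quasiMeasurePreserving.mono_left hμ)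

end

lemma norm_exp_I_int_mul (r : ℤ) (t : ℝ) : ‖Complex.exp (Complex.I * r * t)‖ = 1 := by
  rw [mul_assoc, ← Complex.ofReal_intCast, ← Complex.ofReal_mul, Complex.norm_exp_I_mul_ofReal]

lemma enorm_exp_I_int_mul (r : ℤ) (t : ℝ) : ‖Complex.exp (Complex.I * r * t)‖ₑ = 1 := by
  rw [mul_assoc, ← Complex.ofReal_intCast, ← Complex.ofReal_mul, Complex.enorm_exp_I_mul_ofReal]

lemma integral_exp_I_int_mul_Icc (k : ℤ) :
    ∫ t in Icc (0 : ℝ) (2 * π), Complex.exp (Complex.I * k * t) =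
      if k = 0 then ((2 * π : ℝ) : ℂ) else 0 := by
  rw [integral_Icc_eq_integral_Ioc, ← intervalIntegral.integral_of_le (by positivity)]
  split_ifs with hk
  · simp [hk]
  · rw [integral_exp_mul_complex (by simp [Complex.I_ne_zero, hk])]
    have : Complex.I * k * ((2 * π : ℝ) : ℂ) = k * (2 * π * Complex.I) := by push_cast; ring
    rw [this, Complex.exp_int_mul_two_pi_mul_I]
    simp

noncomputable def gelfandCoeff (F : ℝ × ℝ → ℂ) (r : ℤ) (x : ℝ) : ℂ :=
  ∫ t in Icc (0 : ℝ) (2 * π), Complex.exp (Complex.I * r * t) * F (x, t)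

lemma continuous_gelfandPartial_snd (f : ℝ → ℂ) (N : ℕ) (x : ℝ) :
    Continuous fun t : ℝ => gelfandPartial f N (x, t) := by
  simp only [gelfandPartial]
  exact continuous_finsetSum _ fun s _ => by fun_prop

lemma gelfandCoeff_gelfandPartial (f : ℝ → ℂ) {r : ℤ} {N : ℕ} (hN : r.natAbs ≤ N) (x : ℝ) :
    gelfandCoeff (gelfandPartial f N) r x = ((2 * π : ℝ) : ℂ) * f (x + π * r) := by
  have hterm : ∀ t : ℝ, Complex.exp (Complex.I * r * t) * gelfandPartial f N (x, t) =
      ∑ s ∈ Finset.Icc (-(N : ℤ)) N,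
        Complex.exp (Complex.I * (r - s : ℤ) * t) * f (x + π * s) := by
    intro t
    simp only [gelfandPartial, Finset.mul_sum, ← mul_assoc, ← Complex.exp_add]
    refine Finset.sum_congr rfl fun s _ => ?_
    push_cast
    ring_nf
  simp_rw [gelfandCoeff, hterm]
  rw [integral_finsetSum _ fun s _ => (by fun_prop : Continuous _).integrableOn_Icc]
  simp only [integral_mul_const, integral_exp_I_int_mul_Icc, sub_eq_zero, ite_mul, zero_mul]
  rw [Finset.sum_ite_eq]
  simp only [Finset.mem_Icc, if_pos (show -(N : ℤ) ≤ r ∧ r ≤ N by omega)]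

lemma MeasureTheory.Integrable.exp_I_int_mul_mul {μ : Measure ℝ} {g : ℝ → ℂ} (hg : Integrable g μ) (r : ℤ) :
    Integrable (fun t : ℝ => Complex.exp (Complex.I * r * t) * g t) μ :=
  hg.bdd_mul (c := 1) (by fun_prop : Continuous _).aestronglyMeasurable
    (ae_of_all _ fun t => (norm_exp_I_int_mul r t).le)

lemma gelfandCoeff_sub {F G : ℝ × ℝ → ℂ} {x : ℝ}
    (hF : Integrable (fun t => F (x, t)) (volume.restrict (Icc 0 (2 * π))))
    (hG : Integrable (fun t => G (x, t)) (volume.restrict (Icc 0 (2 * π)))) (r : ℤ) :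
    gelfandCoeff (F - G) r x = gelfandCoeff F r x - gelfandCoeff G r x := by
  simp only [gelfandCoeff, Pi.sub_apply, mul_sub]
  exact integral_sub (hF.exp_I_int_mul_mul r) (hG.exp_I_int_mul_mul r)

lemma aestronglyMeasurable_gelfandPartial {f : ℝ → ℂ} (hf : AEStronglyMeasurable f volume)
    {μ ν : Measure ℝ} [SFinite ν] (hμ : μ ≪ volume) (N : ℕ) :
    AEStronglyMeasurable (gelfandPartial f N) (μ.prod ν) := by
  unfold gelfandPartial
  refine Finset.aestronglyMeasurable_fun_sum _ fun s _ => ?_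
  exact (Continuous.aestronglyMeasurable (by fun_prop)).mul
    (hf.comp_add_right_of_absolutelyContinuous hμ _).comp_fst

section Coeff

variable {μ : Measure ℝ} {G : ℝ × ℝ → ℂ}

lemma aestronglyMeasurable_exp_I_int_mul_snd_mul
    (hG : AEStronglyMeasurable G (μ.prod (volume.restrict (Icc 0 (2 * π))))) (r : ℤ) :
    AEStronglyMeasurable (fun q : ℝ × ℝ => Complex.exp (Complex.I * r * q.2) * G q)
      (μ.prod (volume.restrict (Icc 0 (2 * π)))) :=
  (Continuous.aestronglyMeasurable (by fun_prop)).mul hG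

lemma aestronglyMeasurable_gelfandCoeff
    (hG : AEStronglyMeasurable G (μ.prod (volume.restrict (Icc 0 (2 * π))))) (r : ℤ) :
    AEStronglyMeasurable (gelfandCoeff G r) μ :=
  (aestronglyMeasurable_exp_I_int_mul_snd_mul hG r).integral_prod_right'

lemma lintegral_enorm_gelfandCoeff_le
    (hG : AEStronglyMeasurable G (μ.prod (volume.restrict (Icc 0 (2 * π))))) (r : ℤ) :
    ∫⁻ x, ‖gelfandCoeff G r x‖ₑ ∂μ ≤
      ∫⁻ q, ‖G q‖ₑ ∂(μ.prod (volume.restrict (Icc 0 (2 * π)))) := by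
  refine (lintegral_enorm_integral_le_lintegral_enorm_prod
    (aestronglyMeasurable_exp_I_int_mul_snd_mul hG r)).trans_eq (lintegral_congr fun q => ?_)
  rw [enorm_mul, enorm_exp_I_int_mul, one_mul]

lemma lintegral_enorm_sub_gelfandCoeff_le [SFinite μ] {f : ℝ → ℂ}
    (hf : AEStronglyMeasurable f volume) (hμ : μ ≪ volume) {F : ℝ × ℝ → ℂ}
    (hF : Integrable F (μ.prod (volume.restrict (Icc 0 (2 * π))))) {r : ℤ} {N : ℕ}
    (hN : r.natAbs ≤ N) :
    ∫⁻ x, ‖((2 * π : ℝ) : ℂ) * f (x + π * r) - gelfandCoeff F r x‖ₑ ∂μ ≤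
      ∫⁻ q, ‖gelfandPartial f N q - F q‖ₑ ∂(μ.prod (volume.restrict (Icc 0 (2 * π)))) := by
  refine le_of_eq_of_le (lintegral_congr_ae ?_) (lintegral_enorm_gelfandCoeff_le
    ((aestronglyMeasurable_gelfandPartial hf hμ N).sub hF.1) r)
  filter_upwards [hF.prod_right_ae] with x hx
  rw [gelfandCoeff_sub (continuous_gelfandPartial_snd f N x).integrableOn_Icc hx,
    gelfandCoeff_gelfandPartial f hN]

end Coeff

lemma ofReal_two_pi_smul_muQ : ENNReal.ofReal (2 * π) • muQ =
    (volume.restrict (Icc (0 : ℝ) π)).prod (volume.restrict (Icc (0 : ℝ) (2 * π))) := by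
  rw [muQ, smul_smul, ENNReal.mul_inv_cancel (by simp [Real.pi_pos]) ENNReal.ofReal_ne_top,
    one_smul]

/-- if `f ∈ L²(ℝ)` and `F ∈ L²(Q)` is its Gel'fand transform (the `L²(Q)`-limit
of the symmetric partial sums), then for every `r ∈ ℤ` and almost every `x ∈ [0,π]`,
`f(x+πr) = (1/(2π)) ∫₀^{2π} e^{irt} F(x,t) dt`. -/
theorem gelfand_inversion (f : ℝ → ℂ) (hf : MemLp f 2 volume)
    (F : ℝ × ℝ → ℂ) (hF : MemLp F 2 muQ)
    (hconv : Filter.Tendsto (fun N : ℕ => eLpNorm (fun q => gelfandPartial f N q - F q) 2 muQ)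
      Filter.atTop (nhds 0)) :
    ∀ r : ℤ, ∀ᵐ x ∂(volume.restrict (Set.Icc (0:ℝ) Real.pi)),
      f (x + Real.pi * r) =
        ((2 * Real.pi)⁻¹ : ℝ) *
          ∫ t in Set.Icc (0:ℝ) (2 * Real.pi), Complex.exp (Complex.I * (r : ℂ) * (t : ℂ)) * F (x, t) := by
  intro r
  set ν := (volume.restrict (Icc (0 : ℝ) π)).prod (volume.restrict (Icc (0 : ℝ) (2 * π)))
  have hν : ENNReal.ofReal (2 * π) • muQ = ν := ofReal_two_pi_smul_muQ
  have hFν : MemLp F 2 ν := hν ▸ hF.smul_measure ENNReal.ofReal_ne_top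
  have hμ : volume.restrict (Icc (0 : ℝ) π) ≪ volume :=
    Measure.restrict_le_self.absolutelyContinuous
  have hL1 : Tendsto (fun N : ℕ => ∫⁻ q, ‖gelfandPartial f N q - F q‖ₑ ∂ν) atTop (𝓝 0) :=
    tendsto_lintegral_enorm_of_tendsto_eLpNorm one_le_two
      (fun N => (aestronglyMeasurable_gelfandPartial hf.1 hμ N).sub hFν.1)
      (hν ▸ tendsto_eLpNorm_smul_measure (by norm_num) ENNReal.ofReal_ne_top hconv)
  have hzero := le_antisymm (ge_of_tendsto hL1 (eventually_atTop.2 ⟨r.natAbs, fun N hN =>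
    lintegral_enorm_sub_gelfandCoeff_le hf.1 hμ (hFν.integrable one_le_two) hN⟩)) zero_le
  have hmeas : AEMeasurable (fun x => ‖((2 * π : ℝ) : ℂ) * f (x + π * r) - gelfandCoeff F r x‖ₑ)
      (volume.restrict (Icc 0 π)) :=
    (((hf.1.comp_add_right_of_absolutelyContinuous hμ _).const_mul _).sub
      (aestronglyMeasurable_gelfandCoeff hFν.1 r)).enorm
  filter_upwards [(lintegral_eq_zero_iff' hmeas).1 hzero] with x hx
  have h2π : ((2 * π : ℝ) : ℂ) ≠ 0 := by exact_mod_cast Real.two_pi_pos.ne'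
  rw [Pi.zero_apply, enorm_eq_zero, sub_eq_zero] at hx
  rw [← gelfandCoeff, ← hx, Complex.ofReal_inv, inv_mul_cancel_left₀ h2π]
end

section
/- Let U ⊆ ℂ be an open connected set, let μ₀ ∈ U be a real number, and let ρ : ℂ → ℂ be analytic and nonconstant on U with |ρ(μ₀)| = 1. Suppose that every μ ∈ U with |ρ(μ)| = 1 is real. Then ρ'(μ₀) ≠ 0. -/
/-!
If `ρ'(μ₀) = 0`, then `g = log (ρ / ρ μ₀)` vanishes to some finite order `n ≥ 2` at `μ₀`, and
near `μ₀` the level set `‖ρ‖ = 1` is the zero set of `Re g`. Writing `g = (z - μ₀)ⁿ h` with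
`h μ₀ ≠ 0`, along a ray `μ₀ + t u` the real part of `g` has, for small `t > 0`, the sign of
`Re (uⁿ h μ₀)`. Because `n ≥ 2`, directions `u` in the open upper half-plane realise both signs, so
`Re g` vanishes somewhere in every small upper half-disc around `μ₀`: the level set contains
non-real points.
-/

open Complex Filter Topology

open Real in
lemma exists_im_pos_re_pow_mul_pos {n : ℕ} (hn : 2 ≤ n) {c : ℂ} (hc : c ≠ 0) :
    ∃ u : ℂ, 0 < u.im ∧ 0 < (u ^ n * c).re := by
  set w := exp (π / 4 * I) * c
  -- The angles `(2k+1)π/(4n)`, `k < 4`, lie in `(0, π)` because `n ≥ 2`, and their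
  -- `n`-th multiples are `π/4` plus `k` quarter turns.
  have hturn : ∀ k : ℕ, k < 4 → ∃ u : ℂ, 0 < u.im ∧ u ^ n * c = I ^ k * w := by
    intro k hk
    have hn' : (2 : ℝ) ≤ n := by exact_mod_cast hn
    refine ⟨exp (((2 * k + 1) * π / (4 * n) : ℝ) * I), ?_, ?_⟩
    · rw [exp_ofReal_mul_I_im]
      apply Real.sin_pos_of_pos_of_lt_pi (by positivity)
      rw [div_lt_iff₀ (by positivity)]
      have hk' : (k : ℝ) ≤ 3 := by exact_mod_cast Nat.le_of_lt_succ hk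
      nlinarith [Real.pi_pos]
    · have harg : (n : ℂ) * (((2 * k + 1) * π / (4 * n) : ℝ) * I)
          = π / 4 * I + k * (π / 2 * I) := by
        have : (n : ℂ) ≠ 0 := by exact_mod_cast (by omega : n ≠ 0)
        push_cast
        field_simp
        ring
      rw [← Complex.exp_nat_mul, harg, Complex.exp_add, Complex.exp_nat_mul, exp_pi_div_two_mul_I]
      ring
  have hw : w ≠ 0 := mul_ne_zero (exp_ne_zero _) hc
  obtain ⟨k, hk, hpos⟩ : ∃ k < 4, 0 < (I ^ k * w).re := by
    rcases lt_trichotomy w.re 0 with hre | hre | hre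
    · exact ⟨2, by norm_num, by simpa [pow_two] using hre⟩
    · have him : w.im ≠ 0 := fun him => hw (Complex.ext hre him)
      rcases him.lt_or_gt with him | him
      · exact ⟨1, by norm_num, by simpa using him⟩
      · exact ⟨3, by norm_num, by simpa [pow_succ, pow_two] using him⟩
    · exact ⟨0, by norm_num, by simpa using hre⟩
  obtain ⟨u, hu, hun⟩ := hturn k hk
  exact ⟨u, hu, hun ▸ hpos⟩

lemma frequently_im_gt_and_re_pos {g h : ℂ → ℂ} {x₀ u : ℂ} {n : ℕ}
    (hgh : g =ᶠ[𝓝 x₀] fun z => (z - x₀) ^ n • h z) (hh : ContinuousAt h x₀)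
    (hu : 0 < u.im) (hre : 0 < (u ^ n * h x₀).re) :
    ∃ᶠ z in 𝓝 x₀, x₀.im < z.im ∧ 0 < (g z).re := by
  set γ : ℝ → ℂ := fun t => x₀ + t * u
  have hγ : Tendsto γ (𝓝[>] 0) (𝓝 x₀) :=
    ((by fun_prop : Continuous γ).tendsto' 0 x₀ (by simp [γ])).mono_left nhdsWithin_le_nhds
  have hlim : Tendsto (fun t => (u ^ n * h (γ t)).re) (𝓝[>] 0) (𝓝 (u ^ n * h x₀).re) :=
    (continuous_re.tendsto _).comp ((hh.tendsto.comp hγ).const_mul _)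
  refine hγ.frequently (Eventually.frequently ?_)
  filter_upwards [hγ.eventually hgh, hlim.eventually (lt_mem_nhds hre), self_mem_nhdsWithin]
    with t hgt hpos (ht : 0 < t)
  refine ⟨by simpa [γ] using mul_pos ht hu, ?_⟩
  have hray : g (γ t) = ((t ^ n : ℝ) : ℂ) * (u ^ n * h (γ t)) := by
    rw [hgt]
    simp only [γ, add_sub_cancel_left, smul_eq_mul]
    push_cast
    ring
  rw [hray, re_ofReal_mul]
  exact mul_pos (pow_pos ht n) hpos

theorem AnalyticAt.frequently_im_gt_and_re_eq_zero {g : ℂ → ℂ} {x₀ : ℂ} (hg : AnalyticAt ℂ g x₀)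
    (hg0 : g x₀ = 0) (hg' : deriv g x₀ = 0) (hne : ¬ ∀ᶠ z in 𝓝 x₀, g z = 0) :
    ∃ᶠ z in 𝓝 x₀, x₀.im < z.im ∧ (g z).re = 0 := by
  obtain ⟨n, hn⟩ := ENat.ne_top_iff_exists.mp (mt analyticOrderAt_eq_top.mp hne)
  have h2 : 2 ≤ n := by
    have : (2 : ℕ) ≤ analyticOrderAt g x₀ :=
      (natCast_le_analyticOrderAt_iff_iteratedDeriv_eq_zero hg).mpr fun i hi => by
        interval_cases i <;> simpa
    exact_mod_cast hn ▸ this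
  obtain ⟨h, hh, hh0, hgh⟩ := hg.analyticOrderAt_eq_natCast.mp hn.symm
  obtain ⟨u₁, hu₁, hre₁⟩ := exists_im_pos_re_pow_mul_pos h2 hh0
  obtain ⟨u₂, hu₂, hre₂⟩ := exists_im_pos_re_pow_mul_pos h2 (neg_ne_zero.mpr hh0)
  have hpos := frequently_im_gt_and_re_pos hgh hh.continuousAt hu₁ hre₁
  have hneg := frequently_im_gt_and_re_pos (g := -g) (h := -h) (n := n)
    (by filter_upwards [hgh] with z hz; simp [hz]) hh.continuousAt.neg hu₂ (by simpa using hre₂)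
  -- `Re g` takes both signs on every small upper half-disc, which is connected.
  rw [frequently_iff]
  intro s hs
  obtain ⟨ε, hε, hball⟩ : ∃ ε > 0, Metric.ball x₀ ε ⊆ s ∩ {z | ContinuousAt g z} :=
    Metric.mem_nhds_iff.mp <|
      inter_mem hs (hg.eventually_analyticAt.mono fun z hz => hz.continuousAt)
  set D := Metric.ball x₀ ε ∩ {z | x₀.im < z.im}
  have hD : IsPreconnected D :=
    ((convex_ball x₀ ε).inter (convex_halfSpace_im_gt x₀.im)).isPreconnected
  have hcont : ContinuousOn (fun z => (g z).re) D := fun z hz =>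
    (continuous_re.continuousAt.comp (hball hz.1).2).continuousWithinAt
  obtain ⟨a, ⟨ha_im, ha_re⟩, ha⟩ := (hpos.and_eventually (Metric.ball_mem_nhds x₀ hε)).exists
  obtain ⟨b, ⟨hb_im, hb_re⟩, hb⟩ := (hneg.and_eventually (Metric.ball_mem_nhds x₀ hε)).exists
  obtain ⟨z, hzD, hz⟩ := hD.intermediate_value₂ (f := fun z => (g z).re) (g := fun _ => 0)
    ⟨hb, hb_im⟩ ⟨ha, ha_im⟩ hcont continuousOn_const
    (by simpa using hb_re.le) ha_re.le
  exact ⟨z, (hball hzD.1).1, hzD.2, hz⟩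

theorem AnalyticOnNhd.not_eventuallyEq_const {𝕜 E F : Type*} [NontriviallyNormedField 𝕜]
    [NormedAddCommGroup E] [NormedSpace 𝕜 E] [NormedAddCommGroup F] [NormedSpace 𝕜 F]
    {f : E → F} {U : Set E} {x : E} (hf : AnalyticOnNhd 𝕜 f U) (hU : IsPreconnected U)
    (hx : x ∈ U) (hne : ∃ z ∈ U, ∃ w ∈ U, f z ≠ f w) (c : F) :
    ¬ f =ᶠ[𝓝 x] fun _ => c := by
  intro hc
  have hconst := hf.eqOn_of_preconnected_of_eventuallyEq analyticOnNhd_const hU hx hc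
  obtain ⟨z, hz, w, hw, hzw⟩ := hne
  exact hzw ((hconst hz).trans (hconst hw).symm)

lemma eventually_eq_mul_exp_log_div {ρ : ℂ → ℂ} {x : ℂ} (hρ : ContinuousAt ρ x) (hx : ρ x ≠ 0) :
    ∀ᶠ z in 𝓝 x, ρ z = ρ x * exp (log (ρ z / ρ x)) := by
  filter_upwards [hρ.eventually_ne hx] with z hz
  rw [exp_log (div_ne_zero hz hx), mul_div_cancel₀ _ hx]

/-- Let `U ⊆ ℂ` be open and connected, `μ₀ ∈ U` real, and `ρ` analytic and
nonconstant on `U` with `|ρ(μ₀)| = 1`. If every `μ ∈ U` with `|ρ(μ)| = 1` is real, then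
`ρ'(μ₀) ≠ 0`. -/
theorem nonvanishing_derivative_on_real_level_set
    (U : Set ℂ) (hU : IsOpen U) (hconn : IsConnected U)
    (μ₀ : ℝ) (hμ₀ : (μ₀ : ℂ) ∈ U)
    (ρ : ℂ → ℂ) (hρ : AnalyticOnNhd ℂ ρ U)
    (hnc : ∃ z ∈ U, ∃ w ∈ U, ρ z ≠ ρ w)
    (habs : ‖ρ (μ₀ : ℂ)‖ = 1)
    (hlevel : ∀ μ ∈ U, ‖ρ μ‖ = 1 → ∃ x : ℝ, μ = (x : ℂ)) :
    deriv ρ (μ₀ : ℂ) ≠ 0 := by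
  intro hderiv
  have hρμ₀ : AnalyticAt ℂ ρ μ₀ := hρ _ hμ₀
  have hw₀ : ρ μ₀ ≠ 0 := norm_ne_zero_iff.mp (habs ▸ one_ne_zero)
  have hslit : ρ μ₀ / ρ μ₀ ∈ slitPlane := by rw [div_self hw₀]; exact one_mem_slitPlane
  set g : ℂ → ℂ := fun z => log (ρ z / ρ μ₀)
  have hg : AnalyticAt ℂ g μ₀ := (hρμ₀.div_const).clog hslit
  have hg' : deriv g μ₀ = 0 := by
    rw [((hρμ₀.differentiableAt.hasDerivAt.div_const _).clog hslit).deriv, hderiv]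
    simp
  have hρg : ∀ᶠ z in 𝓝 (μ₀ : ℂ), ρ z = ρ μ₀ * exp (g z) :=
    eventually_eq_mul_exp_log_div hρμ₀.continuousAt hw₀
  have hg_ne : ¬ ∀ᶠ z in 𝓝 (μ₀ : ℂ), g z = 0 := fun hzero =>
    hρ.not_eventuallyEq_const hconn.isPreconnected hμ₀ hnc (ρ μ₀) <| by
      filter_upwards [hρg, hzero] with z hz hgz
      rw [hz, hgz, exp_zero, mul_one]
  obtain ⟨z, ⟨him, hre⟩, hzU, hρz⟩ :=
    ((hg.frequently_im_gt_and_re_eq_zero (by simp [g]) hg' hg_ne).and_eventually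
      ((hU.eventually_mem hμ₀).and hρg)).exists
  obtain ⟨x, rfl⟩ := hlevel z hzU <| by
    rw [hρz, norm_mul, habs, norm_exp, hre, Real.exp_zero, one_mul]
  simp at him
end
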